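/- arXiv:1708.02516 — 2 statements merged into one kernel-verified Lean document; each statement's English description precedes it below -/
import Mathlib

section
/- Let X be a first countable Hausdorff real topological vector space, μ a nonzero Borel measure on X that is finite on bounded sets, and K a bounded open neighbourhood of the origin. If E ⊆ X is topologically dense in X, u ∈ supp(μ), and the pair (u,E) satisfies the uniformity condition — there exist v* ∈ E and r* ∈ (0,1) such that f(u−v*,r) = sup_{z∈u−E} f(z,r) for all r ∈ (0,r*) — then u is an E-weak mode of μ if and only if u is a strong mode of μ. -/
/-!
For `r ≠ 0` the map `x ↦ μ (x + r • K)` is lower semicontinuous: `K` is open, so Fatou's lemma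
applies along the countably generated neighbourhood filters. Hence its supremum over the dense
set `u - E` is its global supremum, and the uniformity condition makes the ratio
`sup_z f(z,r) / f(u,r)` eventually equal to `f(u - v*, r) / f(u,r)`, whose limsup is at most `1`
at an `E`-weak mode. The ratio is at least `1` because `0 < f(u,r) < ∞`, so it tends to `1`.
Conversely every `f(u - v, r)` is bounded by the supremum.
-/

open MeasureTheory Filter Set Topology
open scoped ENNReal NNReal

/-- `fK μ K x r = μ(x + r • K)`, the mass of the scaled translated copy of `K`. -/
noncomputable def fK {X : Type*} [AddCommGroup X] [Module ℝ X] [MeasurableSpace X]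
    (μ : Measure X) (K : Set X) (x : X) (r : ℝ) : ℝ≥0∞ :=
  μ ((fun y => x + r • y) '' K)

/-- The topological support of a Borel measure. -/
def measSupport {X : Type*} [TopologicalSpace X] [MeasurableSpace X]
    (μ : Measure X) : Set X :=
  {x | ∀ U : Set X, IsOpen U → x ∈ U → 0 < μ U}

/-- `u` is a strong mode of `μ` (w.r.t. the reference neighbourhood `K`). -/
def IsStrongMode {X : Type*} [AddCommGroup X] [Module ℝ X] [TopologicalSpace X]
    [MeasurableSpace X] (μ : Measure X) (K : Set X) (u : X) : Prop :=
  Tendsto (fun r : ℝ => (⨆ z : X, fK μ K z r) / fK μ K u r) (𝓝[>] (0:ℝ)) (𝓝 1)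

/-- `u` is an `E`-strong mode of `μ`. -/
def IsEStrongMode {X : Type*} [AddCommGroup X] [Module ℝ X] [TopologicalSpace X]
    [MeasurableSpace X] (μ : Measure X) (K : Set X) (E : Set X) (u : X) : Prop :=
  u ∈ measSupport μ ∧
    limsup (fun r : ℝ => (⨆ v ∈ E, fK μ K (u - v) r) / fK μ K u r) (𝓝[>] (0:ℝ)) ≤ 1

/-- `u` is an `E`-weak mode of `μ`. -/
def IsEWeakMode {X : Type*} [AddCommGroup X] [Module ℝ X] [TopologicalSpace X]
    [MeasurableSpace X] (μ : Measure X) (K : Set X) (E : Set X) (u : X) : Prop :=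
  u ∈ measSupport μ ∧
    ∀ v ∈ E, limsup (fun r : ℝ => fK μ K (u - v) r / fK μ K u r) (𝓝[>] (0:ℝ)) ≤ 1

/-- The uniformity condition for the pair `(u, E)`. -/
def UniformityCondition {X : Type*} [AddCommGroup X] [Module ℝ X]
    [MeasurableSpace X] (μ : Measure X) (K : Set X) (E : Set X) (u : X) : Prop :=
  ∃ v ∈ E, ∃ rs : ℝ, rs ∈ Set.Ioo (0:ℝ) 1 ∧
    ∀ r ∈ Set.Ioo (0:ℝ) rs, fK μ K (u - v) r = ⨆ w ∈ E, fK μ K (u - w) r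

/-- The coincident limiting ratios condition for the pair `(u, E)`. -/
def CLRCondition {X : Type*} [AddCommGroup X] [Module ℝ X] [MeasurableSpace X]
    (μ : Measure X) (K : Set X) (E : Set X) (u : X) : Prop :=
  limsup (fun r : ℝ => (⨆ v ∈ E, fK μ K (u - v) r) / fK μ K u r) (𝓝[>] (0:ℝ)) =
    limsup (fun r : ℝ => (⨆ z : X, fK μ K z r) / fK μ K u r) (𝓝[>] (0:ℝ))

open scoped Pointwise

theorem lowerSemicontinuous_measure_vadd {G : Type*} [AddGroup G] [TopologicalSpace G]
    [IsTopologicalAddGroup G] [FirstCountableTopology G] [MeasurableSpace G]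
    [OpensMeasurableSpace G] (μ : Measure G) {U : Set G} (hU : IsOpen U) :
    LowerSemicontinuous fun x : G => μ (x +ᵥ U) := by
  set g : G → G → ℝ≥0∞ := fun x y => U.indicator 1 (-x + y)
  have hg_left : ∀ y, LowerSemicontinuous fun x => g x y := fun y =>
    (hU.lowerSemicontinuous_indicator zero_le_one).comp (continuous_neg.add continuous_const)
  have hg_right : ∀ x, LowerSemicontinuous (g x) := fun x =>
    (hU.lowerSemicontinuous_indicator zero_le_one).comp (continuous_const.add continuous_id)
  have hμ : ∀ x, μ (x +ᵥ U) = ∫⁻ y, g x y ∂μ := fun x => by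
    rw [← lintegral_indicator_one (hU.vadd x).measurableSet]
    congr with y
    classical
    rw [indicator_apply, mem_vadd_set_iff_neg_vadd_mem]
    rfl
  refine lowerSemicontinuous_iff_le_liminf.2 fun z => ?_
  simp only [hμ]
  calc ∫⁻ y, g z y ∂μ ≤ ∫⁻ y, liminf (fun x => g x y) (𝓝 z) ∂μ :=
        lintegral_mono fun y => (hg_left y).le_liminf z
    _ ≤ liminf (fun x => ∫⁻ y, g x y ∂μ) (𝓝 z) :=
        lintegral_liminf_le fun x => (hg_right x).measurable

theorem LowerSemicontinuous.biSup_eq_iSup_of_dense {α γ : Type*} [TopologicalSpace α]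
    [CompleteLinearOrder γ] [TopologicalSpace γ] [OrderTopology γ] {f : α → γ}
    (hf : LowerSemicontinuous f) {D : Set α} (hD : Dense D) :
    ⨆ x ∈ D, f x = ⨆ x, f x := by
  refine le_antisymm (iSup₂_le_iSup _ f) (iSup_le fun x => ?_)
  have hclosure : closure D ⊆ f ⁻¹' Iic (⨆ x ∈ D, f x) :=
    closure_minimal (fun x hx => le_iSup₂ (f := fun x _ => f x) x hx) (hf.isClosed_preimage _)
  exact hclosure (hD.closure_eq ▸ mem_univ x)

section fK

variable {X : Type*} [AddCommGroup X] [Module ℝ X] [MeasurableSpace X]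
  {μ : Measure X} {K : Set X}

theorem fK_eq_measure_vadd (x : X) (r : ℝ) : fK μ K x r = μ (x +ᵥ r • K) := by
  rw [fK, ← image_smul, ← image_vadd, image_image]
  rfl

variable [TopologicalSpace X] [IsTopologicalAddGroup X] [ContinuousSMul ℝ X]

theorem fK_pos {u : X} (hu : u ∈ measSupport μ) (hK : IsOpen K) (hK0 : (0 : X) ∈ K) {r : ℝ}
    (hr : r ≠ 0) : 0 < fK μ K u r := by
  rw [fK_eq_measure_vadd]
  refine hu _ ((hK.smul₀ hr).vadd u) ?_
  simpa using vadd_mem_vadd_set (a := u) (zero_mem_smul_set (a := r) hK0)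

theorem fK_ne_top (hfin : ∀ s : Set X, Bornology.IsVonNBounded ℝ s → μ s ≠ ⊤)
    (hK : Bornology.IsVonNBounded ℝ K) (x : X) (r : ℝ) : fK μ K x r ≠ ⊤ := by
  rw [fK_eq_measure_vadd]
  refine hfin _ (Bornology.IsVonNBounded.vadd ?_ x)
  simpa [image_smul] using hK.image (r • ContinuousLinearMap.id ℝ X)

variable [FirstCountableTopology X] [OpensMeasurableSpace X]

theorem lowerSemicontinuous_fK (hK : IsOpen K) {r : ℝ} (hr : r ≠ 0) :
    LowerSemicontinuous fun x => fK μ K x r := by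
  simpa only [fK_eq_measure_vadd] using lowerSemicontinuous_measure_vadd μ (hK.smul₀ hr)

theorem iSup_fK_sub_eq_iSup_fK (hK : IsOpen K) {E : Set X} (hE : Dense E) (u : X) {r : ℝ}
    (hr : r ≠ 0) : ⨆ v ∈ E, fK μ K (u - v) r = ⨆ z, fK μ K z r := by
  have hsub : LowerSemicontinuous fun v => fK μ K (u - v) r :=
    (lowerSemicontinuous_fK hK hr).comp (continuous_const.sub continuous_id)
  rw [hsub.biSup_eq_iSup_of_dense hE]
  exact (Equiv.subLeft u).iSup_comp (g := fun z => fK μ K z r)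

end fK

section Modes

variable {X : Type*} [AddCommGroup X] [Module ℝ X] [TopologicalSpace X] [MeasurableSpace X]
  {μ : Measure X} {K : Set X} {u : X}

theorem isStrongMode_iff_limsup_le_one (hpos : ∀ r : ℝ, 0 < r → 0 < fK μ K u r)
    (htop : ∀ r, fK μ K u r ≠ ⊤) :
    IsStrongMode μ K u ↔
      limsup (fun r : ℝ => (⨆ z : X, fK μ K z r) / fK μ K u r) (𝓝[>] 0) ≤ 1 := by
  have hone : ∀ᶠ r in 𝓝[>] (0 : ℝ), 1 ≤ (⨆ z : X, fK μ K z r) / fK μ K u r := by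
    filter_upwards [self_mem_nhdsWithin] with r hr
    rw [ENNReal.le_div_iff_mul_le (.inl (hpos r hr).ne') (.inl (htop r)), one_mul]
    exact le_iSup (fun z => fK μ K z r) u
  exact ⟨fun h => h.limsup_eq.le, tendsto_of_le_liminf_of_limsup_le
    (le_liminf_of_le (by isBoundedDefault) hone)⟩

theorem IsStrongMode.limsup_fK_div_le_one (h : IsStrongMode μ K u) (x : X) :
    limsup (fun r : ℝ => fK μ K x r / fK μ K u r) (𝓝[>] 0) ≤ 1 :=
  (limsup_le_limsup (.of_forall fun r =>
    ENNReal.div_le_div_right (le_iSup (fun z => fK μ K z r) x) _)).trans h.limsup_eq.le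

theorem IsStrongMode.isEWeakMode (h : IsStrongMode μ K u) (hu : u ∈ measSupport μ) (E : Set X) :
    IsEWeakMode μ K E u :=
  ⟨hu, fun v _ => h.limsup_fK_div_le_one (u - v)⟩

variable [IsTopologicalAddGroup X] [ContinuousSMul ℝ X] [FirstCountableTopology X]
  [OpensMeasurableSpace X]

theorem UniformityCondition.exists_eventually_fK_sub_eq_iSup {E : Set X}
    (h : UniformityCondition μ K E u) (hK : IsOpen K) (hE : Dense E) :
    ∃ v ∈ E, ∀ᶠ r in 𝓝[>] 0, fK μ K (u - v) r = ⨆ z, fK μ K z r := by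
  obtain ⟨v, hv, rs, ⟨hrs, -⟩, heq⟩ := h
  refine ⟨v, hv, ?_⟩
  filter_upwards [Ioo_mem_nhdsGT hrs] with r hr
  rw [heq r hr, iSup_fK_sub_eq_iSup_fK hK hE u hr.1.ne']

end Modes

theorem Eweak_iff_strong_of_dense_of_uniformity_general
    {X : Type*} [AddCommGroup X] [Module ℝ X] [TopologicalSpace X]
    [IsTopologicalAddGroup X] [ContinuousSMul ℝ X]
    [FirstCountableTopology X] [MeasurableSpace X] [BorelSpace X]
    (μ : Measure X)
    (hfin : ∀ s : Set X, Bornology.IsVonNBounded ℝ s → μ s ≠ ⊤)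
    (K : Set X) (hKopen : IsOpen K) (hK0 : (0:X) ∈ K)
    (hKbdd : Bornology.IsVonNBounded ℝ K)
    (E : Set X) (hE : Dense E) (u : X) (hu : u ∈ measSupport μ)
    (hunif : UniformityCondition μ K E u) :
    IsEWeakMode μ K E u ↔ IsStrongMode μ K u := by
  refine ⟨fun ⟨_, hweak⟩ => ?_, fun h => h.isEWeakMode hu E⟩
  obtain ⟨v, hv, heq⟩ := hunif.exists_eventually_fK_sub_eq_iSup hKopen hE
  rw [isStrongMode_iff_limsup_le_one (fun r hr => fK_pos hu hKopen hK0 hr.ne')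
    (fK_ne_top hfin hKbdd u)]
  calc limsup (fun r : ℝ => (⨆ z : X, fK μ K z r) / fK μ K u r) (𝓝[>] 0)
      = limsup (fun r : ℝ => fK μ K (u - v) r / fK μ K u r) (𝓝[>] 0) :=
        limsup_congr (heq.mono fun r hr => by rw [hr])
    _ ≤ 1 := hweak v hv

/-- Corollary 2.7. If `E` is topologically dense in `X` and the pair
`(u,E)` satisfies the uniformity condition, then `u` is an `E`-weak mode iff `u` is a
strong mode. -/
theorem Eweak_iff_strong_of_dense_of_uniformity
    {X : Type*} [AddCommGroup X] [Module ℝ X] [TopologicalSpace X]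
    [IsTopologicalAddGroup X] [ContinuousSMul ℝ X] [T2Space X]
    [FirstCountableTopology X] [MeasurableSpace X] [BorelSpace X]
    (μ : Measure X) (hμ : μ ≠ 0)
    (hfin : ∀ s : Set X, Bornology.IsVonNBounded ℝ s → μ s ≠ ⊤)
    (K : Set X) (hKopen : IsOpen K) (hK0 : (0:X) ∈ K)
    (hKbdd : Bornology.IsVonNBounded ℝ K)
    (E : Set X) (hE : Dense E) (u : X) (hu : u ∈ measSupport μ)
    (hunif : UniformityCondition μ K E u) :
    IsEWeakMode μ K E u ↔ IsStrongMode μ K u :=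
  Eweak_iff_strong_of_dense_of_uniformity_general μ hfin K hKopen hK0 hKbdd E hE u hu hunif
end

section
/- Let X be a first countable Hausdorff real topological vector space, μ a nonzero Borel measure on X that is finite on bounded sets, and K a bounded open neighbourhood of the origin. Let u ∈ supp(μ) and let E ⊆ X be nonempty. If E contains the origin, or if E is topologically dense in some neighbourhood of the origin, then 1 ≤ lim_{r↓0} (sup_{z∈u−E} f(z,r)) / f(u,r). -/
/-! Since `0 ∈ closure E`, first countability gives `wₙ ∈ E` with `wₙ → 0`. Each point of the
open set `U = u + rK` lies in `U - wₙ` for all large `n`, so `U ⊆ liminf (U - wₙ)` and Fatou's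
lemma for sets gives `f(u,r) ≤ liminf f(u - wₙ, r) ≤ sup_{w ∈ E} f(u - w, r)`. For `r > 0` the
denominator `f(u,r)` is positive (`u ∈ supp μ`) and finite (`u + rK` is bounded), so the ratio
is at least `1` for every `r > 0`. -/

open MeasureTheory Filter Set Topology
open scoped ENNReal NNReal

open scoped Pointwise

namespace MeasureTheory

theorem measure_liminf_atTop_le_liminf_measure {α : Type*} [MeasurableSpace α] (μ : Measure α)
    (s : ℕ → Set α) : μ (liminf s atTop) ≤ liminf (fun n => μ (s n)) atTop := by
  have hmono : Monotone fun n => ⋂ i ≥ n, s i := fun m n hmn =>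
    biInter_subset_biInter_left fun i hi => le_trans hmn hi
  rw [liminf_eq_iSup_iInf_of_nat, liminf_eq_iSup_iInf_of_nat]
  change μ (⋃ n, ⋂ i ≥ n, s i) ≤ _
  rw [hmono.measure_iUnion]
  exact iSup_mono fun n => le_iInf₂ fun i hi => measure_mono (biInter_subset_of_mem hi)

end MeasureTheory

section TopologicalAddGroup

variable {G : Type*} [AddGroup G] [TopologicalSpace G] [IsTopologicalAddGroup G]

theorem IsOpen.subset_liminf_vadd {U : Set G} (hU : IsOpen U) {v : ℕ → G}
    (hv : Tendsto v atTop (𝓝 0)) : U ⊆ liminf (fun n => v n +ᵥ U) atTop := by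
  intro x hx
  have hx' : Tendsto (fun n => -v n + x) atTop (𝓝 x) := by
    simpa using hv.neg.add_const x
  rw [mem_liminf_iff_eventually_mem]
  filter_upwards [hx'.eventually (hU.mem_nhds hx)] with n hn
  exact ⟨-v n + x, hn, by simp⟩

variable [FirstCountableTopology G] [MeasurableSpace G]

theorem IsOpen.measure_le_iSup_measure_neg_vadd (μ : Measure G) {U E : Set G} (hU : IsOpen U)
    (hE : (0 : G) ∈ closure E) : μ U ≤ ⨆ w ∈ E, μ (-w +ᵥ U) := by
  obtain ⟨v, hvE, hv⟩ := mem_closure_iff_seq_limit.mp hE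
  have hv' : Tendsto (fun n => -v n) atTop (𝓝 0) := by simpa using hv.neg
  calc μ U ≤ μ (liminf (fun n => -v n +ᵥ U) atTop) := measure_mono (hU.subset_liminf_vadd hv')
    _ ≤ liminf (fun n => μ (-v n +ᵥ U)) atTop := measure_liminf_atTop_le_liminf_measure μ _
    _ ≤ ⨆ w ∈ E, μ (-w +ᵥ U) :=
      liminf_le_of_frequently_le' <|
        Frequently.of_forall fun n => le_iSup₂_of_le (v n) (hvE n) le_rfl

end TopologicalAddGroup

theorem Bornology.IsVonNBounded.smul_set {𝕜 E : Type*} [NontriviallyNormedField 𝕜]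
    [AddCommGroup E] [Module 𝕜 E] [TopologicalSpace E] [IsTopologicalAddGroup E]
    [ContinuousSMul 𝕜 E] {s : Set E} (hs : IsVonNBounded 𝕜 s) (c : 𝕜) :
    IsVonNBounded 𝕜 (c • s) := by
  simpa [← image_smul] using hs.image (c • ContinuousLinearMap.id 𝕜 E)

section fK

variable {X : Type*} [AddCommGroup X] [Module ℝ X] [MeasurableSpace X]

theorem fK_eq_measure_vadd_smul_set (μ : Measure X) (K : Set X) (x : X) (r : ℝ) :
    fK μ K x r = μ (x +ᵥ r • K) := by
  simp only [fK, ← image_smul, ← image_vadd, image_image, vadd_eq_add]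

theorem fK_le_iSup_fK_sub [TopologicalSpace X] [IsTopologicalAddGroup X] [ContinuousSMul ℝ X]
    [FirstCountableTopology X] (μ : Measure X)
    {K E : Set X} (hK : IsOpen K) (hE : (0 : X) ∈ closure E) (u : X) {r : ℝ} (hr : r ≠ 0) :
    fK μ K u r ≤ ⨆ w ∈ E, fK μ K (u - w) r := by
  simp only [fK_eq_measure_vadd_smul_set, ← neg_add_eq_sub, ← vadd_vadd]
  exact ((hK.smul₀ hr).vadd u).measure_le_iSup_measure_neg_vadd μ hE

end fK

theorem one_le_limiting_ratio_general
    {X : Type*} [AddCommGroup X] [Module ℝ X] [TopologicalSpace X]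
    [IsTopologicalAddGroup X] [ContinuousSMul ℝ X]
    [FirstCountableTopology X] [MeasurableSpace X]
    (μ : Measure X)
    (hfin : ∀ s : Set X, Bornology.IsVonNBounded ℝ s → μ s ≠ ⊤)
    (K : Set X) (hKopen : IsOpen K) (hK0 : (0:X) ∈ K)
    (hKbdd : Bornology.IsVonNBounded ℝ K)
    (u : X) (hu : u ∈ measSupport μ) (E : Set X)
    (hE' : (0:X) ∈ E ∨ ∃ V ∈ 𝓝 (0:X), V ⊆ closure E) :
    1 ≤ limsup (fun r : ℝ => (⨆ v ∈ E, fK μ K (u - v) r) / fK μ K u r) (𝓝[>] (0:ℝ)) := by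
  have h0E : (0 : X) ∈ closure E :=
    hE'.elim (subset_closure ·) fun ⟨V, hV, hVE⟩ => hVE (mem_of_mem_nhds hV)
  refine le_limsup_of_frequently_le' (Eventually.frequently ?_)
  filter_upwards [self_mem_nhdsWithin] with r (hr : 0 < r)
  have hball_open : IsOpen (u +ᵥ r • K) := (hKopen.smul₀ hr.ne').vadd u
  have hball_bdd : Bornology.IsVonNBounded ℝ (u +ᵥ r • K) := (hKbdd.smul_set r).vadd u
  have hcenter : u ∈ u +ᵥ r • K := by
    simpa using vadd_mem_vadd_set (a := u) (smul_mem_smul_set (a := r) hK0)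
  have hpos : fK μ K u r ≠ 0 := by
    rw [fK_eq_measure_vadd_smul_set]; exact (hu _ hball_open hcenter).ne'
  have htop : fK μ K u r ≠ ⊤ := by
    rw [fK_eq_measure_vadd_smul_set]; exact hfin _ hball_bdd
  rw [ENNReal.le_div_iff_mul_le (.inl hpos) (.inl htop), one_mul]
  exact fK_le_iSup_fK_sub μ hKopen h0E u hr.ne'

/-- Proposition 3.6. If `E` contains the origin or is topologically
dense in some neighbourhood of the origin, then
`1 ≤ lim_{r↓0} (sup_{z ∈ u−E} f(z,r))/f(u,r)`. -/
theorem one_le_limiting_ratio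
    {X : Type*} [AddCommGroup X] [Module ℝ X] [TopologicalSpace X]
    [IsTopologicalAddGroup X] [ContinuousSMul ℝ X] [T2Space X]
    [FirstCountableTopology X] [MeasurableSpace X] [BorelSpace X]
    (μ : Measure X) (hμ : μ ≠ 0)
    (hfin : ∀ s : Set X, Bornology.IsVonNBounded ℝ s → μ s ≠ ⊤)
    (K : Set X) (hKopen : IsOpen K) (hK0 : (0:X) ∈ K)
    (hKbdd : Bornology.IsVonNBounded ℝ K)
    (u : X) (hu : u ∈ measSupport μ) (E : Set X) (hE : E.Nonempty)
    (hE' : (0:X) ∈ E ∨ ∃ V ∈ 𝓝 (0:X), V ⊆ closure E) :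
    1 ≤ limsup (fun r : ℝ => (⨆ v ∈ E, fK μ K (u - v) r) / fK μ K u r) (𝓝[>] (0:ℝ)) :=
  one_le_limiting_ratio_general μ hfin K hKopen hK0 hKbdd u hu E hE'
end
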